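/- arXiv:2003.07190 — 4 statements merged into one kernel-verified Lean document; each statement's English description precedes it below -/
import Mathlib

section
/- Let D = (V,A) be a digraph in which at most one vertex has in-degree 0, and if such a vertex r exists, suppose r ∈ V₁'. Let (V₁', V₂') be disjoint subsets of V such that D[V₁'] has an out-branching and every vertex of D[V₂'] has in-degree at least 1 in D[V₂']. Then there exists a partition (V₁, V₂) of V with V₁' ⊆ V₁, V₂' ⊆ V₂, such that D[V₁] has an out-branching and every vertex of D[V₂] has in-degree at least 1 in D[V₂]. -/
/-- The induced subdigraph `D[S]` has an out-branching rooted at `r`. -/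
def HasOutBranchingFrom {V : Type*} (A : V → V → Prop) (S : Set V) (r : V) : Prop :=
  r ∈ S ∧ ∃ T : V → V → Prop,
    (∀ u v, T u v → A u v ∧ u ∈ S ∧ v ∈ S) ∧
    (∀ u, ¬ T u r) ∧
    (∀ v ∈ S, v ≠ r → ∃! u, T u v) ∧
    (∀ v ∈ S, Relation.ReflTransGen (fun x y => T x y ∨ T y x) r v)

/-- The induced subdigraph `D[S]` has an out-branching. -/
def HasOutBranching {V : Type*} (A : V → V → Prop) (S : Set V) : Prop :=
  ∃ r, HasOutBranchingFrom A S r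

/-!
Take `V₁ ⊇ V₁'` maximal among the sets disjoint from `V₂'` whose induced subdigraph has an
out-branching, and put `V₂ = V₁ᶜ`. A vertex `v ∈ V₂` has an in-neighbour: inside `V₂'` if
`v ∈ V₂'`, and otherwise because all vertices of in-degree `0` lie in `V₁'`. In the latter
case no in-neighbour of `v` lies in `V₁`, since an arc `u → v` with `u ∈ V₁` would extend the
out-branching of `D[V₁]` to `D[V₁ ∪ {v}]`, contradicting maximality.
-/

section

variable {V : Type*} {A : V → V → Prop} {S : Set V} {u v : V}

theorem HasOutBranchingFrom.insert {r : V} (h : HasOutBranchingFrom A S r) (hu : u ∈ S)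
    (hv : v ∉ S) (huv : A u v) : HasOutBranchingFrom A (insert v S) r := by
  obtain ⟨hr, T, hTA, hTr, hTpar, hTconn⟩ := h
  refine ⟨Or.inr hr, fun x y => T x y ∨ (x = u ∧ y = v), ?_, ?_, ?_, ?_⟩
  · rintro x y (hxy | ⟨rfl, rfl⟩)
    · obtain ⟨hA, hx, hy⟩ := hTA x y hxy
      exact ⟨hA, Or.inr hx, Or.inr hy⟩
    · exact ⟨huv, Or.inr hu, Or.inl rfl⟩
  · rintro x (hx | ⟨-, rfl⟩)
    exacts [hTr x hx, hv hr]
  · rintro w (rfl | hw) hwr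
    · refine ⟨u, Or.inr ⟨rfl, rfl⟩, ?_⟩
      rintro x (hx | ⟨rfl, -⟩)
      exacts [absurd (hTA x w hx).2.2 hv, rfl]
    · obtain ⟨p, hp, hpuniq⟩ := hTpar w hw hwr
      refine ⟨p, Or.inl hp, ?_⟩
      rintro x (hx | ⟨-, rfl⟩)
      exacts [hpuniq x hx, absurd hw hv]
  · have hconn : ∀ w ∈ S, Relation.ReflTransGen
        (fun x y => (T x y ∨ (x = u ∧ y = v)) ∨ (T y x ∨ (y = u ∧ x = v))) r w :=
      fun w hw => Relation.ReflTransGen.mono (fun _ _ => Or.imp Or.inl Or.inl) _ _ (hTconn w hw)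
    rintro w (rfl | hw)
    exacts [(hconn u hu).tail (Or.inl (Or.inr ⟨rfl, rfl⟩)), hconn w hw]

theorem HasOutBranching.insert (h : HasOutBranching A S) (hu : u ∈ S) (hv : v ∉ S)
    (huv : A u v) : HasOutBranching A (insert v S) :=
  let ⟨r, hr⟩ := h
  ⟨r, hr.insert hu hv huv⟩

theorem notMem_of_arc_of_maximal_hasOutBranching {B : Set V}
    (hmax : Maximal (fun W => Disjoint W B ∧ HasOutBranching A W) S) (hv : v ∉ S)
    (hvB : v ∉ B) (huv : A u v) : u ∉ S := by
  intro hu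
  have hins : Disjoint (insert v S) B ∧ HasOutBranching A (insert v S) :=
    ⟨Set.disjoint_insert_left.mpr ⟨hvB, hmax.prop.1⟩, hmax.prop.2.insert hu hv huv⟩
  exact hv (hmax.eq_of_subset hins (Set.subset_insert v S) ▸ Set.mem_insert v S)

end

theorem stmt_4_general {V : Type*} [Fintype V] (A : V → V → Prop) (V₁' V₂' : Set V)
    (hdisj : Disjoint V₁' V₂')
    (hzero : ∀ v : V, (∀ u, ¬ A u v) → v ∈ V₁')
    (hB : HasOutBranching A V₁')
    (hδ : ∀ v ∈ V₂', ∃ u ∈ V₂', A u v) :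
    ∃ V₁ V₂ : Set V, V₁' ⊆ V₁ ∧ V₂' ⊆ V₂ ∧ Disjoint V₁ V₂ ∧ V₁ ∪ V₂ = Set.univ ∧
      HasOutBranching A V₁ ∧ ∀ v ∈ V₂, ∃ u ∈ V₂, A u v := by
  obtain ⟨V₁, hV₁', hmax⟩ := Finite.exists_le_maximal
    (p := fun W => Disjoint W V₂' ∧ HasOutBranching A W) ⟨hdisj, hB⟩
  have hV₂' : V₂' ⊆ V₁ᶜ := hmax.prop.1.subset_compl_left
  refine ⟨V₁, V₁ᶜ, hV₁', hV₂', disjoint_compl_right, Set.union_compl_self V₁, hmax.prop.2, ?_⟩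
  intro v hv
  by_cases hvB : v ∈ V₂'
  · obtain ⟨u, hu, huv⟩ := hδ v hvB
    exact ⟨u, hV₂' hu, huv⟩
  · obtain ⟨u, huv⟩ : ∃ u, A u v := by
      by_contra! hsource
      exact hv (hV₁' (hzero v hsource))
    exact ⟨u, notMem_of_arc_of_maximal_hasOutBranching hmax hv hvB huv, huv⟩

/-- In a digraph with at most one vertex of in-degree `0`, any such vertex lying in
`V₁'`, a pair of disjoint sets `(V₁', V₂')` with `D[V₁']` having an out-branching and
`δ⁻(D[V₂']) ≥ 1` extends to a partition `(V₁, V₂)` of `V` with the same properties. -/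
theorem stmt_4 {V : Type*} [Fintype V] (A : V → V → Prop) (V₁' V₂' : Set V)
    (hdisj : Disjoint V₁' V₂')
    (hone : ∀ v w : V, (∀ u, ¬ A u v) → (∀ u, ¬ A u w) → v = w)
    (hzero : ∀ v : V, (∀ u, ¬ A u v) → v ∈ V₁')
    (hB : HasOutBranching A V₁')
    (hδ : ∀ v ∈ V₂', ∃ u ∈ V₂', A u v) :
    ∃ V₁ V₂ : Set V, V₁' ⊆ V₁ ∧ V₂' ⊆ V₂ ∧ Disjoint V₁ V₂ ∧ V₁ ∪ V₂ = Set.univ ∧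
      HasOutBranching A V₁ ∧ ∀ v ∈ V₂, ∃ u ∈ V₂, A u v :=
  stmt_4_general A V₁' V₂' hdisj hzero hB hδ
end

section
/- Let G be a digraph of order n with minimum out-degree at least 1, and let t ≥ 1 be the number of vertices of out-degree exactly 1. Then G contains a directed cycle of length at most ⌈(n + t − 1)/2⌉. -/
/-!
Induction on the vertex set `S`. Let `U` and `W` be the vertices of out-degree `1` and `2`.
If some vertex `q` receives no arc from `U` and at most one arc from `W` (two if `q ∈ U`),
deleting `q` keeps every out-degree positive and creates at most one new vertex of out-degree
one, so the induction hypothesis applies to `S \ {q}`. Otherwise each of the at least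
`|S| - |U|` vertices not entered from `U` is entered at least twice from `W` (three times if it
lies in `U`); as only `2|W| ≤ 2(|S| - |U|)` arcs leave `W`, no vertex of `U` is among them, and
since only `|U|` arcs leave `U`, they all stay in `U`. So `U` carries a digraph of minimum
out-degree one, hence a cycle of length at most `|U| = t ≤ (|S| + t) / 2`.
Subgraphs without vertices of out-degree one are handled by deleting all arcs but one out of
some vertex, which makes `t = 1`.
-/

/-- A directed cycle of length `m` in the digraph with arc relation `A`. -/
def IsCycleOn {V : Type*} (A : V → V → Prop) (m : ℕ) (c : ZMod m → V) : Prop :=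
  2 ≤ m ∧ Function.Injective c ∧ ∀ i, A (c i) (c (i + 1))

open Finset Function

section Cycles

variable {V W : Type*} {A : V → V → Prop}

def HasCycleOfLengthLE (A : V → V → Prop) (k : ℕ) : Prop :=
  ∃ m c, IsCycleOn A m c ∧ m ≤ k

theorem IsCycleOn.map {B : W → W → Prop} {m : ℕ} {c : ZMod m → V} (hc : IsCycleOn A m c)
    {f : V → W} (hf : Injective f) (hAB : ∀ x y, A x y → B (f x) (f y)) :
    IsCycleOn B m (f ∘ c) :=
  ⟨hc.1, hf.comp hc.2.1, fun i => hAB _ _ (hc.2.2 i)⟩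

theorem HasCycleOfLengthLE.map {B : W → W → Prop} {k : ℕ} (h : HasCycleOfLengthLE A k)
    {f : V → W} (hf : Injective f) (hAB : ∀ x y, A x y → B (f x) (f y)) :
    HasCycleOfLengthLE B k :=
  let ⟨m, c, hc, hm⟩ := h
  ⟨m, f ∘ c, hc.map hf hAB, hm⟩

theorem HasCycleOfLengthLE.mono {B : V → V → Prop} {k l : ℕ} (h : HasCycleOfLengthLE A k)
    (hAB : ∀ x y, A x y → B x y) (hkl : k ≤ l) : HasCycleOfLengthLE B l :=
  let ⟨m, c, hc, hm⟩ := h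
  ⟨m, c, hc.map injective_id hAB, hm.trans hkl⟩

theorem isCycleOn_iterate_minimalPeriod {F : V → V} {x : V} (hx : x ∈ periodicPts F)
    (hFx : F x ≠ x) :
    IsCycleOn (fun a b => F a = b) (minimalPeriod F x) (fun i => F^[i.val] x) := by
  have hp1 : minimalPeriod F x ≠ 1 := by rwa [Ne, minimalPeriod_eq_one_iff_isFixedPt]
  have hp2 : 2 ≤ minimalPeriod F x := by
    have := minimalPeriod_pos_of_mem_periodicPts hx
    omega
  have : NeZero (minimalPeriod F x) := ⟨by omega⟩
  have : Fact (1 < minimalPeriod F x) := ⟨hp2⟩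
  refine ⟨hp2, fun i j h => ZMod.val_injective _ ?_, fun i => ?_⟩
  · exact iterate_injOn_Iio_minimalPeriod (ZMod.val_lt i) (ZMod.val_lt j) h
  · change F (F^[i.val] x) = F^[(i + 1).val] x
    rw [ZMod.val_add, ZMod.val_one, iterate_mod_minimalPeriod_eq, iterate_succ_apply']

theorem Finite.exists_mem_periodicPts [Finite V] [Nonempty V] (F : V → V) :
    ∃ x, x ∈ periodicPts F := by
  obtain ⟨m, n, hmn, heq⟩ :=
    Finite.exists_ne_map_eq_of_infinite (fun n : ℕ => F^[n] (Classical.arbitrary V))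
  wlog hlt : m < n generalizing m n
  · exact this n m hmn.symm heq.symm (by omega)
  refine ⟨F^[m] (Classical.arbitrary V), mk_mem_periodicPts (n := n - m) (by omega) ?_⟩
  rw [IsPeriodicPt, IsFixedPt, ← iterate_add_apply, Nat.sub_add_cancel hlt.le]
  exact heq.symm

theorem hasCycleOfLengthLE_card_of_ne [Fintype V] [Nonempty V] {F : V → V}
    (hF : ∀ x, F x ≠ x) : HasCycleOfLengthLE (fun a b => F a = b) (Fintype.card V) :=
  let ⟨x, hx⟩ := Finite.exists_mem_periodicPts F
  ⟨_, _, isCycleOn_iterate_minimalPeriod hx (hF x), minimalPeriod_le_card⟩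

theorem hasCycleOfLengthLE_card {S : Finset V} (hS : S.Nonempty) (hloop : ∀ v, ¬ A v v)
    (hout : ∀ u ∈ S, ∃ w ∈ S, A u w) : HasCycleOfLengthLE A #S := by
  choose F hFS hFA using hout
  have : Nonempty S := hS.to_subtype
  have hne : ∀ u : S, (⟨F u u.2, hFS _ _⟩ : S) ≠ u := fun u h => by
    have hFu : F u u.2 = u := congrArg Subtype.val h
    exact hloop u (by simpa only [hFu] using hFA u u.2)
  simpa using (hasCycleOfLengthLE_card_of_ne hne).map Subtype.val_injective
    (by rintro u _ rfl; exact hFA u u.2)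

end Cycles

section OutDegree

open scoped Classical

variable {V : Type*} (A : V → V → Prop) (S T : Finset V)

noncomputable def outDegIn (v : V) : ℕ := #{w ∈ S | A v w}

noncomputable def outDegSetIn (k : ℕ) : Finset V := {v ∈ S | outDegIn A S v = k}

noncomputable def inDegFrom (q : V) : ℕ := #{x ∈ T | A x q}

theorem mem_outDegSetIn {k : ℕ} {v : V} :
    v ∈ outDegSetIn A S k ↔ v ∈ S ∧ outDegIn A S v = k :=
  mem_filter

theorem outDegSetIn_subset (k : ℕ) : outDegSetIn A S k ⊆ S :=
  filter_subset _ _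

theorem outDegIn_univ [Fintype V] (v : V) : outDegIn A univ v = Nat.card {w // A v w} := by
  rw [Nat.card_eq_fintype_card, Fintype.card_subtype]
  rfl

theorem card_outDegSetIn_univ [Fintype V] (k : ℕ) :
    #(outDegSetIn A univ k) = Nat.card {u // Nat.card {w // A u w} = k} := by
  rw [Nat.card_eq_fintype_card, Fintype.card_subtype]
  simp only [outDegSetIn, outDegIn_univ]

theorem inDegFrom_eq_zero_iff {q : V} : inDegFrom A T q = 0 ↔ ∀ x ∈ T, ¬ A x q := by
  rw [inDegFrom, card_eq_zero, filter_eq_empty_iff]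

theorem sum_inDegFrom : ∑ q ∈ S, inDegFrom A T q = ∑ x ∈ T, outDegIn A S x :=
  (sum_card_bipartiteAbove_eq_sum_card_bipartiteBelow A).symm

theorem sum_inDegFrom_outDegSetIn (k : ℕ) :
    ∑ q ∈ S, inDegFrom A (outDegSetIn A S k) q = k * #(outDegSetIn A S k) := by
  rw [sum_inDegFrom, sum_const_nat fun x (hx : x ∈ outDegSetIn A S k) => (mem_filter.1 hx).2,
    mul_comm]

theorem card_outDegSetIn_add_le {k l : ℕ} (hkl : k ≠ l) :
    #(outDegSetIn A S k) + #(outDegSetIn A S l) ≤ #S := by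
  unfold outDegSetIn
  rw [← card_union_of_disjoint (disjoint_filter.2 fun _ _ hk hl => hkl (hk.symm.trans hl))]
  exact card_le_card (union_subset (filter_subset _ _) (filter_subset _ _))

variable {A S}

theorem outDegIn_erase_add {q : V} (hq : q ∈ S) (v : V) :
    outDegIn A (S.erase q) v + (if A v q then 1 else 0) = outDegIn A S v := by
  unfold outDegIn
  rw [filter_erase]
  by_cases h : A v q
  · rw [if_pos h, card_erase_add_one (mem_filter.2 ⟨hq, h⟩)]
  · rw [if_neg h, erase_eq_of_notMem fun hq' => h (mem_filter.1 hq').2, add_zero]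

theorem nonempty_erase_of_outDegIn {q : V} (hloop : ∀ v, ¬ A v v) (hq : 1 ≤ outDegIn A S q) :
    (S.erase q).Nonempty := by
  obtain ⟨w, hw⟩ := card_pos.1 hq
  rw [mem_filter] at hw
  exact ⟨w, mem_erase.2 ⟨fun h => hloop q (h ▸ hw.2), hw.1⟩⟩

theorem one_le_outDegIn_erase {q : V} (hdeg : ∀ v ∈ S, 1 ≤ outDegIn A S v) (hq : q ∈ S)
    (hqU : inDegFrom A (outDegSetIn A S 1) q = 0) (v : V) (hv : v ∈ S.erase q) :
    1 ≤ outDegIn A (S.erase q) v := by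
  have hvS := mem_of_mem_erase hv
  have key := outDegIn_erase_add (A := A) hq v
  have := hdeg v hvS
  split_ifs at key with hvq
  · have : outDegIn A S v ≠ 1 := fun h =>
      (inDegFrom_eq_zero_iff A _).1 hqU v (mem_outDegSetIn A S |>.2 ⟨hvS, h⟩) hvq
    omega
  · omega

theorem card_outDegSetIn_erase_le {q : V} (hq : q ∈ S) :
    #(outDegSetIn A (S.erase q) 1) ≤
      #((outDegSetIn A S 1).erase q) + inDegFrom A (outDegSetIn A S 2) q := by
  refine (card_le_card fun v hv => ?_).trans (card_union_le _ _)
  obtain ⟨hv, hv1⟩ := mem_filter.1 hv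
  obtain ⟨hvq, hvS⟩ := mem_erase.1 hv
  have key := outDegIn_erase_add (A := A) hq v
  split_ifs at key with hA
  · exact mem_union_right _ (mem_filter.2 ⟨mem_filter.2 ⟨hvS, by omega⟩, hA⟩)
  · exact mem_union_left _ (mem_erase.2 ⟨hvq, mem_filter.2 ⟨hvS, by omega⟩⟩)

theorem card_outDegSetIn_erase_le_succ {q : V} (hq : q ∈ S)
    (hqW : inDegFrom A (outDegSetIn A S 2) q ≤ 1 + if q ∈ outDegSetIn A S 1 then 1 else 0) :
    #(outDegSetIn A (S.erase q) 1) ≤ #(outDegSetIn A S 1) + 1 := by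
  have hU : #((outDegSetIn A S 1).erase q) + (if q ∈ outDegSetIn A S 1 then 1 else 0) =
      #(outDegSetIn A S 1) := by
    split_ifs with h
    exacts [card_erase_add_one h, by rw [erase_eq_of_notMem h, add_zero]]
  have := card_outDegSetIn_erase_le (A := A) hq
  omega

theorem one_le_inDegFrom_outDegSetIn
    (h : ∀ q ∈ S, inDegFrom A (outDegSetIn A S 1) q = 0 →
      1 + (if q ∈ outDegSetIn A S 1 then 1 else 0) < inDegFrom A (outDegSetIn A S 2) q)
    (u : V) (hu : u ∈ outDegSetIn A S 1) : 1 ≤ inDegFrom A (outDegSetIn A S 1) u := by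
  set U := outDegSetIn A S 1
  set W := outDegSetIn A S 2
  have hq : ∀ q ∈ S, 2 + (if q ∈ U ∧ inDegFrom A U q = 0 then 1 else 0) ≤
      2 * inDegFrom A U q + inDegFrom A W q := by
    intro q hq
    by_cases h0 : inDegFrom A U q = 0
    · have := h q hq h0
      simp only [h0, and_true]
      split_ifs at this ⊢ <;> omega
    · rw [if_neg fun h => h0 h.2]
      omega
  have hsum := sum_le_sum hq
  rw [sum_add_distrib, sum_add_distrib, ← mul_sum, sum_inDegFrom_outDegSetIn,
    sum_inDegFrom_outDegSetIn, sum_const, smul_eq_mul, sum_boole, Nat.cast_id] at hsum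
  have := card_outDegSetIn_add_le A S (k := 1) (l := 2) (by norm_num)
  have hempty : ∀ q ∈ S, ¬ (q ∈ U ∧ inDegFrom A U q = 0) := by
    rw [← filter_eq_empty_iff, ← card_eq_zero]
    omega
  exact Nat.one_le_iff_ne_zero.2 fun h0 => hempty u (outDegSetIn_subset A S 1 hu) ⟨hu, h0⟩

theorem mem_outDegSetIn_one_of_adj
    (hU : ∀ u ∈ outDegSetIn A S 1, 1 ≤ inDegFrom A (outDegSetIn A S 1) u) {u w : V}
    (hu : u ∈ outDegSetIn A S 1) (hw : w ∈ S) (huw : A u w) : w ∈ outDegSetIn A S 1 := by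
  have hsplit := sum_sdiff (outDegSetIn_subset A S 1) (f := inDegFrom A (outDegSetIn A S 1))
  rw [sum_inDegFrom_outDegSetIn, one_mul] at hsplit
  have hU' : #(outDegSetIn A S 1) ≤
      ∑ q ∈ outDegSetIn A S 1, inDegFrom A (outDegSetIn A S 1) q := by
    simpa using card_nsmul_le_sum _ _ 1 hU
  have hrest : ∑ q ∈ S \ outDegSetIn A S 1, inDegFrom A (outDegSetIn A S 1) q = 0 := by
    omega
  by_contra hwU
  exact (inDegFrom_eq_zero_iff A _).1 (sum_eq_zero_iff.1 hrest w (mem_sdiff.2 ⟨hw, hwU⟩)) u hu huw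

theorem hasCycleOfLengthLE_card_outDegSetIn_one (hloop : ∀ v, ¬ A v v)
    (hne : (outDegSetIn A S 1).Nonempty)
    (hU : ∀ u ∈ outDegSetIn A S 1, 1 ≤ inDegFrom A (outDegSetIn A S 1) u) :
    HasCycleOfLengthLE A #(outDegSetIn A S 1) := by
  refine hasCycleOfLengthLE_card hne hloop fun u hu => ?_
  have hdeg : 0 < outDegIn A S u := by rw [(mem_outDegSetIn A S |>.1 hu).2]; exact one_pos
  obtain ⟨w, hw⟩ := card_pos.1 hdeg
  obtain ⟨hwS, huw⟩ := mem_filter.1 hw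
  exact ⟨w, mem_outDegSetIn_one_of_adj hU hu hwS huw, huw⟩

def pruneOut (A : V → V → Prop) (x a : V) : V → V → Prop :=
  fun v w => A v w ∧ (v = x → w = a)

theorem outDegIn_pruneOut {x a : V} (ha : a ∈ S) (hxa : A x a) (v : V) :
    outDegIn (pruneOut A x a) S v = if v = x then 1 else outDegIn A S v := by
  unfold outDegIn pruneOut
  split_ifs with hv
  · subst hv
    exact card_eq_one.2 ⟨a, by ext w; constructor <;> simp_all⟩
  · simp [hv]

theorem outDegSetIn_pruneOut {x a : V} (hx : x ∈ S) (ha : a ∈ S) (hxa : A x a) :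
    outDegSetIn (pruneOut A x a) S 1 = insert x (outDegSetIn A S 1) := by
  ext v
  simp only [mem_outDegSetIn, mem_insert, outDegIn_pruneOut ha hxa]
  split_ifs with hv <;> simp_all

theorem hasCycleOfLengthLE_of_nonempty_outDegSetIn (hloop : ∀ v, ¬ A v v)
    (hdeg : ∀ v ∈ S, 1 ≤ outDegIn A S v) (hU : (outDegSetIn A S 1).Nonempty) {s : ℕ}
    (hs : #(outDegSetIn A S 1) ≤ s)
    (ih : ∀ q ∈ S, (S.erase q).Nonempty → (∀ v ∈ S.erase q, 1 ≤ outDegIn A (S.erase q) v) →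
      ∀ s', 1 ≤ s' → #(outDegSetIn A (S.erase q) 1) ≤ s' →
        HasCycleOfLengthLE A ((#(S.erase q) + s') / 2)) :
    HasCycleOfLengthLE A ((#S + s) / 2) := by
  by_cases hdel : ∃ q ∈ S, inDegFrom A (outDegSetIn A S 1) q = 0 ∧
      inDegFrom A (outDegSetIn A S 2) q ≤ 1 + if q ∈ outDegSetIn A S 1 then 1 else 0
  · obtain ⟨q, hq, hqU, hqW⟩ := hdel
    have := card_outDegSetIn_erase_le_succ hq hqW
    refine (ih q hq (nonempty_erase_of_outDegIn hloop (hdeg q hq))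
      (one_le_outDegIn_erase hdeg hq hqU) (s + 1) (by omega) (by omega)).mono
      (fun _ _ h => h) ?_
    have := card_erase_add_one hq
    omega
  · push Not at hdel
    refine (hasCycleOfLengthLE_card_outDegSetIn_one hloop hU
      (one_le_inDegFrom_outDegSetIn hdel)).mono (fun _ _ h => h) ?_
    have := card_le_card (outDegSetIn_subset A S 1)
    omega

/-- The bound is claimed for every `s ≥ max t 1`, so that deleting a vertex, which may raise
`t` by one, stays within the induction; and for every `A`, as the case `t = 0` prunes arcs. -/
theorem hasCycleOfLengthLE_of_outDegIn (S : Finset V) :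
    ∀ A : V → V → Prop, (∀ v, ¬ A v v) → S.Nonempty → (∀ v ∈ S, 1 ≤ outDegIn A S v) →
      ∀ s, 1 ≤ s → #(outDegSetIn A S 1) ≤ s → HasCycleOfLengthLE A ((#S + s) / 2) := by
  induction S using Finset.strongInduction with
  | H S ih =>
  intro A hloop hS hdeg s hs1 hs
  have key : ∀ A : V → V → Prop, (∀ v, ¬ A v v) → (∀ v ∈ S, 1 ≤ outDegIn A S v) →
      (outDegSetIn A S 1).Nonempty → #(outDegSetIn A S 1) ≤ s →
        HasCycleOfLengthLE A ((#S + s) / 2) := fun A hloop hdeg hU hs =>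
    hasCycleOfLengthLE_of_nonempty_outDegSetIn hloop hdeg hU hs fun q hq =>
      ih _ (erase_ssubset hq) A hloop
  obtain hU | hU := (outDegSetIn A S 1).eq_empty_or_nonempty
  · obtain ⟨x, hx⟩ := hS
    obtain ⟨a, ha⟩ := card_pos.1 (hdeg x hx)
    obtain ⟨haS, hxa⟩ := mem_filter.1 ha
    have hprune := outDegSetIn_pruneOut hx haS hxa
    rw [hU, insert_empty] at hprune
    refine (key (pruneOut A x a) (fun v h => hloop v h.1) (fun v hv => ?_) ?_ ?_).mono
      (fun _ _ h => h.1) le_rfl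
    · rw [outDegIn_pruneOut haS hxa]
      split_ifs
      exacts [le_rfl, hdeg v hv]
    · rw [hprune]
      exact singleton_nonempty x
    · rwa [hprune, card_singleton]
  · exact key A hloop hdeg hU hs

end OutDegree

/-- Shen's theorem, case `t ≥ 1`: a loopless digraph of order `n` with minimum
out-degree at least `1` in which `t ≥ 1` vertices have out-degree exactly `1`
contains a directed cycle of length at most `⌈(n + t - 1)/2⌉`. -/
theorem stmt_6 {V : Type*} [Fintype V] (A : V → V → Prop)
    (hloop : ∀ v, ¬ A v v)
    (hdeg : ∀ v : V, 1 ≤ Nat.card {w : V // A v w})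
    (t : ℕ) (ht : t = Nat.card {u : V // Nat.card {w : V // A u w} = 1})
    (ht1 : 1 ≤ t) :
    ∃ (m : ℕ) (c : ZMod m → V), IsCycleOn A m c ∧
      m ≤ ((Fintype.card V + t - 1) + 1) / 2 := by
  rw [← card_outDegSetIn_univ] at ht
  obtain ⟨u, -⟩ := card_pos.1 (ht ▸ ht1)
  obtain ⟨m, c, hc, hm⟩ := hasCycleOfLengthLE_of_outDegIn univ A hloop ⟨u, mem_univ u⟩
    (fun v _ => (outDegIn_univ A v).symm ▸ hdeg v) t ht1 ht.ge
  exact ⟨m, c, hc, by rw [card_univ] at hm; omega⟩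
end

section
/- Let D be a digraph and S ⊆ V(D) such that every directed cycle of D contains at least two vertices of S. Let D_S be the digraph on S with an arc a → b whenever D has a directed path from a to b with all internal vertices outside S. Then every directed cycle of D induces a directed cycle in D_S, and conversely every directed cycle of D_S corresponds to a closed directed walk in D. In particular, if D_S has a cycle avoiding at least k vertices of S, then D has a directed cycle avoiding at least k vertices of S. -/
/-- The arc relation of the digraph `D_S` on vertex set `S`: there is an arc `a → b`
whenever `D` contains a directed path from `a` to `b` all of whose internal
vertices lie outside `S`. -/
def ContractArc {V : Type*} (A : V → V → Prop) (S : Set V) (a b : V) : Prop :=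
  a ∈ S ∧ b ∈ S ∧ ∃ l : List V, (∀ v ∈ l, v ∉ S) ∧ List.Chain A a (l ++ [b])

/-!
Cycles are handled as Mathlib's `Cycle`s, i.e. lists up to rotation. Read from a vertex of `S`,
a cycle of `D` splits into paths between consecutive `S`-vertices whose interiors avoid `S`;
these are arcs of `D_S`, so the `S`-vertices in cyclic order form a cycle of `D_S`, of length at
least two by hypothesis. Conversely, replacing each arc of a cycle of `D_S` by its path gives a
closed walk of `D` whose `S`-vertices are those of the `D_S`-cycle. Splitting a closed walk at a
repeated vertex and keeping a half that visits two distinct vertices ends in a directed cycle of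
`D` on vertices of the walk, which avoids every vertex of `S` that the `D_S`-cycle avoids.
-/

namespace Cycle

variable {α : Type*}

theorem coe_append_cons (p q : List α) (a : α) :
    ((p ++ a :: q : List α) : Cycle α) = ↑(a :: (q ++ p)) :=
  coe_eq_coe.mpr (by simpa using List.isRotated_append (l := p) (l' := a :: q))

theorem exists_eq_coe_cons_of_mem {s : Cycle α} {a : α} (h : a ∈ s) :
    ∃ l, s = ↑(a :: l) := by
  induction s using Quotient.inductionOn with
  | h L =>
    obtain ⟨p, q, rfl⟩ := List.append_of_mem (mem_coe_iff.mp h)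
    exact ⟨q ++ p, coe_append_cons p q a⟩

theorem exists_eq_coe_cons_of_not_nodup {s : Cycle α} (h : ¬s.Nodup) :
    ∃ (a : α) (l : List α), a ∈ l ∧ s = ↑(a :: l) := by
  induction s using Quotient.inductionOn with
  | h L =>
    obtain ⟨a, ha⟩ := not_forall_not.mp (mt List.nodup_iff_sublist.mpr h)
    obtain ⟨r₁, r₂, rfl, har₁, har₂⟩ := List.cons_sublist_iff.mp ha
    obtain ⟨p, q, rfl⟩ := List.append_of_mem har₁
    refine ⟨a, q ++ r₂ ++ p, ?_, ?_⟩
    · simp [List.singleton_sublist.mp har₂]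
    · simpa using coe_append_cons p (q ++ r₂) a

theorem Chain.exists_nodup_nontrivial_subset {r : α → α → Prop} {s : Cycle α}
    (hs : s.Chain r) (hnt : s.Nontrivial) :
    ∃ t : Cycle α, t.Chain r ∧ t.Nodup ∧ t.Nontrivial ∧ ∀ v ∈ t, v ∈ s := by
  induction hlen : s.length using Nat.strong_induction_on generalizing s with
  | _ n ih =>
  by_cases hnd : s.Nodup
  · exact ⟨s, hs, hnd, hnt, fun _ hv => hv⟩
  -- A repeated vertex `a` splits the closed walk into two shorter closed walks through `a`,
  -- at least one of which visits a vertex other than `a`.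
  obtain ⟨a, l, hal, rfl⟩ := exists_eq_coe_cons_of_not_nodup hnd
  obtain ⟨p, q, rfl⟩ := List.append_of_mem hal
  obtain ⟨hp, hq⟩ : (↑(a :: p) : Cycle α).Chain r ∧ (↑(a :: q) : Cycle α).Chain r := by
    rw [chain_coe_cons, List.append_assoc, List.cons_append, List.isChain_cons_split] at hs
    exact hs
  obtain ⟨b, hb, hba⟩ : ∃ b ∈ a :: (p ++ a :: q), b ≠ a := by
    obtain ⟨y, z, hyz, hy, hz⟩ := hnt
    by_cases hya : y = a
    · exact ⟨z, hz, fun hza => hyz (hya.trans hza.symm)⟩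
    · exact ⟨y, hy, hya⟩
  obtain ⟨l', hl', hl'len, hl'nt, hl'sub⟩ : ∃ l' : List α, (↑(a :: l') : Cycle α).Chain r ∧
      l'.length < (p ++ a :: q).length ∧ (↑(a :: l') : Cycle α).Nontrivial ∧
      ∀ v ∈ l', v ∈ p ++ a :: q := by
    simp only [List.mem_cons, List.mem_append, hba, false_or] at hb
    rcases hb with hbp | hbq
    · exact ⟨p, hp, by simp, ⟨b, a, hba, by simp [hbp], by simp⟩, by simp +contextual⟩
    · exact ⟨q, hq, by simp; omega, ⟨b, a, hba, by simp [hbq], by simp⟩, by simp +contextual⟩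
  obtain ⟨t, ht, htnd, htnt, hts⟩ := ih _ (by simpa [← hlen] using hl'len) hl' hl'nt rfl
  refine ⟨t, ht, htnd, htnt, fun v hv => ?_⟩
  have hv' := List.mem_cons.mp (mem_coe_iff.mp (hts v hv))
  exact mem_coe_iff.mpr (hv'.elim (fun h => h ▸ List.mem_cons_self) fun h =>
    List.mem_cons_of_mem _ (hl'sub v h))

end Cycle

section ZModCycle

variable {V : Type*}

def cycleOfZMod (m : ℕ) (c : ZMod m → V) : Cycle V :=
  ((List.range m).map fun i : ℕ => c i : List V)

theorem mem_cycleOfZMod {m : ℕ} [NeZero m] {c : ZMod m → V} {v : V} :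
    v ∈ cycleOfZMod m c ↔ v ∈ Set.range c := by
  simp only [cycleOfZMod, Cycle.mem_coe_iff, List.mem_map, List.mem_range, Set.mem_range]
  constructor
  · rintro ⟨i, -, rfl⟩
    exact ⟨i, rfl⟩
  · rintro ⟨z, rfl⟩
    exact ⟨z.val, z.val_lt, by rw [ZMod.natCast_zmod_val]⟩

theorem chain_cycleOfZMod_iff {A : V → V → Prop} {m : ℕ} [NeZero m] {c : ZMod m → V} :
    (cycleOfZMod m c).Chain A ↔ ∀ z, A (c z) (c (z + 1)) := by
  obtain ⟨n, rfl⟩ : ∃ n, m = n + 1 := Nat.exists_eq_succ_of_ne_zero (NeZero.ne m)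
  rw [cycleOfZMod, ← Cycle.map_coe, Cycle.chain_map, Cycle.chain_range_succ]
  constructor
  · rintro ⟨hlast, hsucc⟩ z
    obtain ⟨i, hi, rfl⟩ : ∃ i < n + 1, (i : ZMod (n + 1)) = z :=
      ⟨z.val, z.val_lt, ZMod.natCast_zmod_val z⟩
    rcases Nat.lt_succ_iff_lt_or_eq.mp hi with hi | rfl
    · simpa using hsucc i hi
    · simpa using hlast
  · intro h
    exact ⟨by simpa using h n, fun i _ => by simpa using h i⟩

theorem IsCycleOn.neZero {A : V → V → Prop} {m : ℕ} {c : ZMod m → V} (hc : IsCycleOn A m c) :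
    NeZero m :=
  ⟨by have := hc.1; omega⟩

theorem IsCycleOn.nodup_cycleOfZMod {A : V → V → Prop} {m : ℕ} {c : ZMod m → V}
    (hc : IsCycleOn A m c) : (cycleOfZMod m c).Nodup := by
  refine Cycle.nodup_coe_iff.mpr (List.nodup_range.map_on fun i hi j hj hij => ?_)
  rw [List.mem_range] at hi hj
  simpa [Nat.mod_eq_of_lt hi, Nat.mod_eq_of_lt hj] using congrArg ZMod.val (hc.2.1 hij)

theorem IsCycleOn.nontrivial_cycleOfZMod {A : V → V → Prop} {m : ℕ} {c : ZMod m → V}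
    (hc : IsCycleOn A m c) : (cycleOfZMod m c).Nontrivial := by
  have := hc.neZero
  have : Fact (1 < m) := ⟨hc.1⟩
  exact ⟨c 0, c 1, hc.2.1.ne zero_ne_one, mem_cycleOfZMod.mpr ⟨0, rfl⟩,
    mem_cycleOfZMod.mpr ⟨1, rfl⟩⟩

theorem Cycle.Chain.exists_isCycleOn {A : V → V → Prop} {s : Cycle V} (hs : s.Chain A)
    (hnd : s.Nodup) (hnt : s.Nontrivial) :
    ∃ (m : ℕ) (c : ZMod m → V), IsCycleOn A m c ∧ cycleOfZMod m c = s := by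
  induction s using Quotient.inductionOn with
  | h L =>
  have hL : 2 ≤ L.length := Cycle.length_nontrivial hnt
  have : NeZero L.length := ⟨by omega⟩
  have hcL : cycleOfZMod L.length (fun z => L[z.val]'z.val_lt) = L := by
    refine congrArg _ (List.ext_getElem (by simp) fun i _ hi => ?_)
    simp [Nat.mod_eq_of_lt hi]
  refine ⟨L.length, _, ⟨hL, fun z z' h => ZMod.val_injective _ ?_, ?_⟩, hcL⟩
  · exact (List.Nodup.getElem_inj_iff (Cycle.nodup_coe_iff.mp hnd)).mp h
  · exact chain_cycleOfZMod_iff.mp (by rw [hcL]; exact hs)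

end ZModCycle

section Contraction

variable {V : Type*} {A : V → V → Prop} {S : Set V}

theorem isChain_contractArc_filter [DecidablePred (· ∈ S)] {a b : V} {p l : List V}
    (ha : a ∈ S) (hb : b ∈ S) (hp : ∀ v ∈ p, v ∉ S) (h : List.IsChain A (a :: (p ++ l ++ [b]))) :
    List.IsChain (ContractArc A S) (a :: (l.filter (· ∈ S) ++ [b])) := by
  induction l generalizing a p with
  | nil =>
    rw [List.append_nil] at h
    exact List.isChain_pair.mpr ⟨ha, hb, p, hp, h⟩
  | cons v l ih =>
    by_cases hv : v ∈ S
    · rw [List.append_assoc, List.cons_append, List.isChain_cons_split] at h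
      rw [List.filter_cons_of_pos (by simpa using hv), List.cons_append, List.isChain_cons_cons]
      exact ⟨⟨ha, hv, p, hp, h.1⟩, ih hv (p := []) (by simp) (by simpa using h.2)⟩
    · rw [List.filter_cons_of_neg (by simpa using hv)]
      have hpv : ∀ x ∈ p ++ [v], x ∉ S := by
        simp only [List.mem_append, List.mem_singleton]
        rintro x (hx | rfl)
        exacts [hp x hx, hv]
      exact ih ha hpv (by simpa using h)

theorem exists_isChain_of_isChain_contractArc {a b : V} {l : List V}
    (h : List.IsChain (ContractArc A S) (a :: (l ++ [b]))) :
    ∃ w : List V, List.IsChain A (a :: (w ++ [b])) ∧ (∀ v ∈ l, v ∈ w) ∧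
      ∀ v ∈ w, v ∈ S → v ∈ l := by
  induction l generalizing a with
  | nil =>
    obtain ⟨-, -, p, hp, hpA⟩ := List.isChain_pair.mp h
    exact ⟨p, hpA, by simp, fun v hv hvS => absurd hvS (hp v hv)⟩
  | cons c l ih =>
    rw [List.cons_append, List.isChain_cons_cons] at h
    obtain ⟨⟨-, -, p, hp, hpA⟩, hl⟩ := h
    obtain ⟨w, hwA, hlw, hwS⟩ := ih hl
    refine ⟨p ++ c :: w, ?_, ?_, ?_⟩
    · rw [List.append_assoc, List.cons_append, List.isChain_cons_split]
      exact ⟨hpA, hwA⟩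
    · simp only [List.mem_cons, List.mem_append]
      rintro v (rfl | hv)
      · simp
      · exact Or.inr (Or.inr (hlw v hv))
    · simp only [List.mem_cons, List.mem_append]
      rintro v (hv | rfl | hv) hvS
      · exact absurd hvS (hp v hv)
      · simp
      · exact Or.inr (hwS v hv hvS)

theorem Cycle.Chain.exists_contractArc_chain {s : Cycle V} (hs : s.Chain A) (hnd : s.Nodup) {a : V}
    (ha : a ∈ s) (haS : a ∈ S) :
    ∃ t : Cycle V, t.Chain (ContractArc A S) ∧ t.Nodup ∧ ∀ v, v ∈ t ↔ v ∈ s ∧ v ∈ S := by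
  classical
  obtain ⟨l, rfl⟩ := Cycle.exists_eq_coe_cons_of_mem ha
  refine ⟨↑(a :: l.filter (· ∈ S)), ?_, ?_, fun v => ?_⟩
  · exact isChain_contractArc_filter haS haS (p := []) (by simp) (by simpa using hs)
  · exact Cycle.nodup_coe_iff.mpr
      ((List.filter_sublist.cons_cons a).nodup (Cycle.nodup_coe_iff.mp hnd))
  · simp only [Cycle.mem_coe_iff, List.mem_cons, List.mem_filter, decide_eq_true_eq]
    constructor
    · rintro (rfl | ⟨hv, hvS⟩)
      · exact ⟨Or.inl rfl, haS⟩
      · exact ⟨Or.inr hv, hvS⟩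
    · rintro ⟨rfl | hv, hvS⟩
      · exact Or.inl rfl
      · exact Or.inr ⟨hv, hvS⟩

theorem Cycle.Chain.exists_chain_of_contractArc {s : Cycle V} (hs : s.Chain (ContractArc A S)) :
    ∃ w : Cycle V, w.Chain A ∧ (∀ v ∈ s, v ∈ w) ∧ ∀ v ∈ w, v ∈ S → v ∈ s := by
  induction s using Quotient.inductionOn with
  | h L =>
  rcases L with _ | ⟨a, l⟩
  · exact ⟨Cycle.nil, Cycle.Chain.nil A, fun _ hv => hv, fun v hv => absurd hv (Cycle.notMem_nil v)⟩
  · obtain ⟨w, hwA, hlw, hwS⟩ := exists_isChain_of_isChain_contractArc hs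
    refine ⟨↑(a :: w), hwA, ?_, ?_⟩
    · exact fun v hv => List.mem_cons.mpr (Or.imp_right (hlw v) (List.mem_cons.mp hv))
    · exact fun v hv hvS =>
        List.mem_cons.mpr (Or.imp_right (fun hv' => hwS v hv' hvS) (List.mem_cons.mp hv))

end Contraction

/-- If every directed cycle of `D` contains at least two vertices of `S`, then every
directed cycle of `D` induces a directed cycle of `D_S` (on its `S`-vertices), and
conversely a cycle of `D_S` avoiding at least `k` vertices of `S` yields a directed
cycle of `D` avoiding at least `k` vertices of `S`. -/
theorem stmt_10 {V : Type*} [Fintype V] (A : V → V → Prop) (S : Set V)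
    (hcyc : ∀ (m : ℕ) (c : ZMod m → V), IsCycleOn A m c →
      ∃ i j : ZMod m, c i ≠ c j ∧ c i ∈ S ∧ c j ∈ S) :
    (∀ (m : ℕ) (c : ZMod m → V), IsCycleOn A m c →
      ∃ (m' : ℕ) (c' : ZMod m' → V), IsCycleOn (ContractArc A S) m' c' ∧
        Set.range c' = Set.range c ∩ S) ∧
    (∀ (k : ℕ) (m' : ℕ) (c' : ZMod m' → V), IsCycleOn (ContractArc A S) m' c' →
      k ≤ Nat.card {v : V // v ∈ S ∧ v ∉ Set.range c'} →
      ∃ (m : ℕ) (c : ZMod m → V), IsCycleOn A m c ∧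
        k ≤ Nat.card {v : V // v ∈ S ∧ v ∉ Set.range c}) := by
  constructor
  · intro m c hc
    have := hc.neZero
    obtain ⟨i, j, hij, hiS, hjS⟩ := hcyc m c hc
    obtain ⟨t, ht, htnd, hts⟩ := (chain_cycleOfZMod_iff.mpr hc.2.2).exists_contractArc_chain
      hc.nodup_cycleOfZMod (mem_cycleOfZMod.mpr ⟨i, rfl⟩) hiS
    have hcS : ∀ {z}, c z ∈ S → c z ∈ t := fun hz =>
      (hts _).mpr ⟨mem_cycleOfZMod.mpr ⟨_, rfl⟩, hz⟩
    obtain ⟨m', c', hc', rfl⟩ := ht.exists_isCycleOn htnd ⟨c i, c j, hij, hcS hiS, hcS hjS⟩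
    have := hc'.neZero
    refine ⟨m', c', hc', Set.ext fun v => ?_⟩
    rw [← mem_cycleOfZMod, hts, mem_cycleOfZMod, Set.mem_inter_iff]
  · intro k m' c' hc' hk
    have := hc'.neZero
    obtain ⟨w, hw, hsw, hwS⟩ := (chain_cycleOfZMod_iff.mpr hc'.2.2).exists_chain_of_contractArc
    obtain ⟨x, y, hxy, hx, hy⟩ := hc'.nontrivial_cycleOfZMod
    obtain ⟨t, ht, htnd, htnt, htw⟩ :=
      hw.exists_nodup_nontrivial_subset ⟨x, y, hxy, hsw x hx, hsw y hy⟩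
    obtain ⟨m, c, hc, rfl⟩ := ht.exists_isCycleOn htnd htnt
    have := hc.neZero
    refine ⟨m, c, hc, hk.trans (Nat.card_le_card_of_injective _
      (Subtype.impEmbedding _ _ fun v ⟨hvS, hvc'⟩ => ⟨hvS, fun hvc => hvc' ?_⟩).injective)⟩
    exact mem_cycleOfZMod.mp (hwS v (htw v (mem_cycleOfZMod.mpr hvc)) hvS)
end

section
/- Let D be a digraph, s a vertex, and suppose that in D − s there are at least 2k strong components each containing an out-neighbour of s, for some k ≥ max(k₁, k₂) with k₁, k₂ ≥ 1. Suppose furthermore that D − s contains an induced subdigraph with minimum in-degree at least 1 and at least k₂ vertices. Then there exist disjoint vertex sets V₁, V₂ with s ∈ V₁, |V₁| ≥ k₁, |V₂| ≥ k₂, such that D[V₁] contains an out-branching rooted at s and every vertex of D[V₂] has in-degree at least 1 in D[V₂]. -/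
open Relation

section

variable {V : Type*}

def InducedAdj (A : V → V → Prop) (X : Set V) (x y : V) : Prop :=
  A x y ∧ x ∈ X ∧ y ∈ X

def MinInDegreePos (A : V → V → Prop) (S : Set V) : Prop :=
  ∀ v ∈ S, ∃ u ∈ S, A u v

variable {A : V → V → Prop}

theorem InducedAdj.reflTransGen_mono {X Y : Set V} (h : X ⊆ Y) {a b : V}
    (hab : ReflTransGen (InducedAdj A X) a b) : ReflTransGen (InducedAdj A Y) a b :=
  ReflTransGen.mono (fun _ _ ⟨hA, hx, hy⟩ => ⟨hA, h hx, h hy⟩) _ _ hab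

theorem exists_initial_strongComponent {X : Set V} (hX : X.Finite) (hne : X.Nonempty) :
    ∃ C ⊆ X, C.Nonempty ∧ (∀ c ∈ C, ∀ u ∈ X, A u c → u ∈ C) ∧
      ∀ c ∈ C, ∀ c' ∈ C, ReflTransGen (InducedAdj A X) c c' := by
  let anc : V → Set V := fun v => {u | u ∈ X ∧ ReflTransGen (InducedAdj A X) u v}
  obtain ⟨v, hvX, hmin⟩ := hX.exists_minimalFor anc X hne
  -- the ancestor set of `v` is minimal, so `v` is an ancestor of each of its ancestors
  have hback : ∀ u ∈ anc v, ReflTransGen (InducedAdj A X) v u := fun u hu =>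
    (hmin hu.1 (fun _ hw => ⟨hw.1, hw.2.trans hu.2⟩) ⟨hvX, .refl⟩).2
  refine ⟨anc v, fun _ hu => hu.1, ⟨v, hvX, .refl⟩, ?_, ?_⟩
  · exact fun c hc u hu hA => ⟨hu, .head ⟨hA, hu, hc.1⟩ hc.2⟩
  · exact fun c hc c' hc' => hc.2.trans (hback c' hc')

theorem MinInDegreePos.union_initial {U S C : Set V} (hU : MinInDegreePos A U)
    (hS : MinInDegreePos A S) (hCU : C ⊆ U) (hC : ∀ c ∈ C, ∀ u ∈ U \ S, A u c → u ∈ C) :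
    MinInDegreePos A (S ∪ C) := by
  rintro v (hv | hv)
  · obtain ⟨u, hu, hA⟩ := hS v hv
    exact ⟨u, .inl hu, hA⟩
  · obtain ⟨u, hu, hA⟩ := hU v (hCU hv)
    by_cases huS : u ∈ S
    · exact ⟨u, .inl huS, hA⟩
    · exact ⟨u, .inr (hC v hv u ⟨hu, huS⟩ hA), hA⟩

theorem MinInDegreePos.exists_subset_ncard_inter_le {U W : Set V} (hUfin : U.Finite)
    (hU : MinInDegreePos A U)
    (hW : W.Pairwise fun w w' =>
      ¬ (ReflTransGen (InducedAdj A U) w w' ∧ ReflTransGen (InducedAdj A U) w' w)) :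
    ∀ n ≤ U.ncard, ∃ S ⊆ U, MinInDegreePos A S ∧ n ≤ S.ncard ∧ (S ∩ W).ncard ≤ n := by
  intro n
  induction n with
  | zero => exact fun _ => ⟨∅, Set.empty_subset _, fun _ h => h.elim, Nat.zero_le _, by simp⟩
  | succ n ih =>
    intro hn
    obtain ⟨S, hSU, hS, hSn, hSW⟩ := ih (by omega)
    by_cases hbig : n + 1 ≤ S.ncard
    · exact ⟨S, hSU, hS, hbig, by omega⟩
    have hrest : (U \ S).Nonempty := Set.sdiff_nonempty.2 fun hUS => by
      have := Set.ncard_le_ncard hUS (hUfin.subset hSU)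
      omega
    obtain ⟨C, hCX, hCne, hCin, hCconn⟩ :=
      exists_initial_strongComponent (A := A) hUfin.sdiff hrest
    have hCU : C ⊆ U := hCX.trans Set.sdiff_subset
    have hdisj : Disjoint S C := Set.disjoint_right.2 fun _ hx => (hCX hx).2
    have hCW : (C ∩ W).ncard ≤ 1 := by
      refine (Set.ncard_le_one (hUfin.subset (Set.inter_subset_left.trans hCU))).2 ?_
      rintro a ⟨haC, haW⟩ b ⟨hbC, hbW⟩
      by_contra hab
      exact hW haW hbW hab ⟨InducedAdj.reflTransGen_mono Set.sdiff_subset (hCconn a haC b hbC),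
        InducedAdj.reflTransGen_mono Set.sdiff_subset (hCconn b hbC a haC)⟩
    refine ⟨S ∪ C, Set.union_subset hSU hCU, hU.union_initial hS hCU hCin, ?_, ?_⟩
    · rw [Set.ncard_union_eq hdisj (hUfin.subset hSU) (hUfin.subset hCU)]
      have := (Set.ncard_pos (hUfin.subset hCU)).2 hCne
      omega
    · calc ((S ∪ C) ∩ W).ncard ≤ (S ∩ W).ncard + (C ∩ W).ncard := by
            rw [Set.union_inter_distrib_right]; exact Set.ncard_union_le _ _
        _ ≤ n + 1 := by omega

theorem hasOutBranchingFrom_insert {r : V} {F : Set V} (hrF : r ∉ F) (hF : ∀ v ∈ F, A r v) :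
    HasOutBranchingFrom A (insert r F) r := by
  refine ⟨Set.mem_insert r F, fun u v => u = r ∧ v ∈ F, ?_, ?_, ?_, ?_⟩
  · rintro u v ⟨rfl, hv⟩
    exact ⟨hF v hv, Set.mem_insert u F, Set.mem_insert_of_mem u hv⟩
  · exact fun _ h => hrF h.2
  · rintro v (rfl | hv) hne
    · exact absurd rfl hne
    · exact ⟨r, ⟨rfl, hv⟩, fun _ h => h.1⟩
  · rintro v (rfl | hv)
    · exact .refl
    · exact .single (.inl ⟨rfl, hv⟩)

end

theorem stmt_14_general {V : Type*} (A : V → V → Prop) (s : V)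
    (k k₁ k₂ : ℕ) (hk₂ : 1 ≤ k₂) (hk₁k : k₁ ≤ k) (hk₂k : k₂ ≤ k)
    (hW : ∃ W : Finset V, 2 * k ≤ W.card ∧ (∀ w ∈ W, A s w ∧ w ≠ s) ∧
      ∀ w ∈ W, ∀ w' ∈ W, w ≠ w' →
        ¬ (Relation.ReflTransGen (fun x y => A x y ∧ x ≠ s ∧ y ≠ s) w w' ∧
           Relation.ReflTransGen (fun x y => A x y ∧ x ≠ s ∧ y ≠ s) w' w))
    (hU : ∃ U : Set V, s ∉ U ∧ k₂ ≤ Nat.card U ∧ ∀ v ∈ U, ∃ u ∈ U, A u v) :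
    ∃ V₁ V₂ : Set V, Disjoint V₁ V₂ ∧ s ∈ V₁ ∧
      k₁ ≤ Nat.card V₁ ∧ k₂ ≤ Nat.card V₂ ∧
      HasOutBranchingFrom A V₁ s ∧ ∀ v ∈ V₂, ∃ u ∈ V₂, A u v := by
  obtain ⟨W, hWcard, hsW, hWpair⟩ := hW
  obtain ⟨U, hsU, hUcard, hUin⟩ := hU
  rw [Nat.card_coe_set_eq] at hUcard
  have hUfin : U.Finite := Set.finite_of_ncard_pos (by omega)
  have hUs : U ⊆ {s}ᶜ := fun _ hx hxs => hsU (hxs ▸ hx)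
  -- the relation `fun x y => A x y ∧ x ≠ s ∧ y ≠ s` of the statement is `InducedAdj A {s}ᶜ`
  obtain ⟨V₂, hV₂U, hV₂in, hV₂card, hV₂W⟩ :=
    MinInDegreePos.exists_subset_ncard_inter_le hUfin hUin (W := W)
      (fun w hw w' hw' hne ⟨h, h'⟩ => hWpair w hw w' hw' hne
        ⟨InducedAdj.reflTransGen_mono hUs h, InducedAdj.reflTransGen_mono hUs h'⟩) k₂ hUcard
  have hleft : k₁ ≤ ((W : Set V) \ V₂).ncard := by
    have := Set.ncard_inter_add_ncard_sdiff_eq_ncard (W : Set V) V₂ W.finite_toSet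
    rw [Set.ncard_coe_finset, Set.inter_comm] at this
    omega
  refine ⟨insert s ((W : Set V) \ V₂), V₂, ?_, Set.mem_insert _ _, ?_, ?_,
    hasOutBranchingFrom_insert (fun h => (hsW s h.1).2 rfl) fun v hv => (hsW v hv.1).1, hV₂in⟩
  · exact Set.disjoint_insert_left.2 ⟨fun h => hsU (hV₂U h), Set.disjoint_sdiff_left⟩
  · rw [Nat.card_coe_set_eq]
    exact hleft.trans (Set.ncard_le_ncard (Set.subset_insert _ _) (W.finite_toSet.sdiff.insert s))
  · rwa [Nat.card_coe_set_eq]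

/-- If `D - s` has at least `2k` strong components each containing an out-neighbour
of `s` (witnessed by out-neighbours of `s` that are pairwise not mutually reachable
in `D - s`), where `k ≥ max(k₁,k₂)` and `k₁, k₂ ≥ 1`, and `D - s` contains an
induced subdigraph with minimum in-degree at least `1` and at least `k₂` vertices,
then there are disjoint sets `V₁, V₂` with `s ∈ V₁`, `|V₁| ≥ k₁`, `|V₂| ≥ k₂`,
`D[V₁]` having an out-branching rooted at `s` and `δ⁻(D[V₂]) ≥ 1`. -/
theorem stmt_14 {V : Type*} [Fintype V] (A : V → V → Prop) (s : V)
    (k k₁ k₂ : ℕ) (hk₁ : 1 ≤ k₁) (hk₂ : 1 ≤ k₂) (hk₁k : k₁ ≤ k) (hk₂k : k₂ ≤ k)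
    (hW : ∃ W : Finset V, 2 * k ≤ W.card ∧ (∀ w ∈ W, A s w ∧ w ≠ s) ∧
      ∀ w ∈ W, ∀ w' ∈ W, w ≠ w' →
        ¬ (Relation.ReflTransGen (fun x y => A x y ∧ x ≠ s ∧ y ≠ s) w w' ∧
           Relation.ReflTransGen (fun x y => A x y ∧ x ≠ s ∧ y ≠ s) w' w))
    (hU : ∃ U : Set V, s ∉ U ∧ k₂ ≤ Nat.card U ∧ ∀ v ∈ U, ∃ u ∈ U, A u v) :
    ∃ V₁ V₂ : Set V, Disjoint V₁ V₂ ∧ s ∈ V₁ ∧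
      k₁ ≤ Nat.card V₁ ∧ k₂ ≤ Nat.card V₂ ∧
      HasOutBranchingFrom A V₁ s ∧ ∀ v ∈ V₂, ∃ u ∈ V₂, A u v :=
  stmt_14_general A s k k₁ k₂ hk₂ hk₁k hk₂k hW hU
end
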